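/- arXiv:2204.06294 — 2 statements merged into one kernel-verified Lean document; each statement's English description precedes it below -/
import Mathlib

section
/- Let g̃ = g ⊕ a be an orthogonal decomposition of a pseudo-Riemannian Lie algebra where g is an ideal and a an abelian subalgebra, and let ∇ be the Levi-Civita connection. Then for all H ∈ a and X ∈ g̃: ∇_H X = ad(H)^a(X) and ∇_X H = −ad(H)^s(X), where ad(H)^s and ad(H)^a are the symmetric and antisymmetric parts of ad(H) with respect to the metric. -/
/-- For a standard decomposition `g̃ = g ⊕ a` (`g` an ideal, `a` abelian, orthogonal sum),
the Levi-Civita connection satisfies `∇_H X = ad(H)^a X` and `∇_X H = −ad(H)^s X`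
for `H ∈ a` and `X ∈ g̃`. -/
theorem levi_civita_standard_decomposition
    {V : Type*} [LieRing V] [LieAlgebra ℝ V]
    (g : V →ₗ[ℝ] V →ₗ[ℝ] ℝ)
    (hsymm : ∀ x y, g x y = g y x)
    (hnd : ∀ x, (∀ y, g x y = 0) → x = 0)
    (nabla : V → V → V)
    (hKoszul : ∀ x y z, 2 * g (nabla x y) z =
      g ⁅x, y⁆ z - g ⁅y, z⁆ x + g ⁅z, x⁆ y)
    (adStar : V → V →ₗ[ℝ] V)
    (hadStar : ∀ u x y, g (adStar u x) y = g x ⁅u, y⁆)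
    (G A : Submodule ℝ V)
    (hGideal : ∀ x : V, ∀ v ∈ G, ⁅x, v⁆ ∈ G)
    (hAabelian : ∀ x ∈ A, ∀ y ∈ A, ⁅x, y⁆ = (0 : V))
    (horth : ∀ v ∈ G, ∀ a ∈ A, g v a = 0)
    (hsum : G ⊔ A = ⊤)
    (hinter : G ⊓ A = ⊥) :
    ∀ H ∈ A, ∀ X : V,
      nabla H X = (1/2 : ℝ) • (⁅H, X⁆ - adStar H X) ∧
      nabla X H = -((1/2 : ℝ) • (⁅H, X⁆ + adStar H X)) := by
  intro H hH X
  -- every bracket lands in G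
  have hbrG : ∀ x z : V, ⁅x, z⁆ ∈ G := by
    intro x z
    have hx : x ∈ G ⊔ A := by rw [hsum]; exact Submodule.mem_top
    have hz : z ∈ G ⊔ A := by rw [hsum]; exact Submodule.mem_top
    obtain ⟨xg, hxg, xa, hxa, rfl⟩ := Submodule.mem_sup.mp hx
    obtain ⟨zg, hzg, za, hza, rfl⟩ := Submodule.mem_sup.mp hz
    have h1 : (⁅xg, zg⁆ : V) ∈ G := hGideal xg zg hzg
    have h2 : (⁅xg, za⁆ : V) ∈ G := by
      rw [← lie_skew]
      exact G.neg_mem (hGideal za xg hxg)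
    have h3 : (⁅xa, zg⁆ : V) ∈ G := hGideal xa zg hzg
    have h4 : (⁅xa, za⁆ : V) ∈ G := by
      rw [hAabelian xa hxa za hza]; exact G.zero_mem
    simp only [add_lie, lie_add]
    exact G.add_mem (G.add_mem h1 h3) (G.add_mem h2 h4)
  have key : ∀ u v : V, (∀ z, g u z = g v z) → u = v := by
    intro u v h
    have h0 : u - v = 0 := hnd (u - v) (fun z => by simp [map_sub, h z])
    exact sub_eq_zero.mp h0
  have hstar : ∀ z, g (adStar H X) z = - g ⁅z, H⁆ X := by
    intro z
    rw [hadStar, hsymm, ← lie_skew z H, map_neg, LinearMap.neg_apply, neg_neg]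
  constructor
  · apply key
    intro z
    have hK := hKoszul H X z
    have h0 : g ⁅X, z⁆ H = 0 := horth _ (hbrG X z) H hH
    have hs := hstar z
    simp only [map_smul, map_sub, LinearMap.smul_apply, LinearMap.sub_apply,
      smul_eq_mul]
    linarith
  · apply key
    intro z
    have hK := hKoszul X H z
    have h0 : g ⁅z, X⁆ H = 0 := horth _ (hbrG z X) H hH
    have hs := hstar z
    have hskew : g ⁅X, H⁆ z = - g ⁅H, X⁆ z := by
      rw [← lie_skew H X, map_neg, LinearMap.neg_apply, neg_neg]
    have hHz : g ⁅H, z⁆ X = - g ⁅z, H⁆ X := by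
      rw [← lie_skew z H, map_neg, LinearMap.neg_apply, neg_neg]
    simp only [map_neg, map_smul, map_add, LinearMap.neg_apply,
      LinearMap.smul_apply, LinearMap.add_apply, smul_eq_mul]
    linarith
end

section
/- Let V be a finite-dimensional real vector space with a nondegenerate symmetric bilinear form, and let D^s, D^a be endomorphisms with D^s symmetric and D^a antisymmetric, satisfying [D^s, D^a] = h·D^s − 2(D^s)² for some real constant h. If D^s is diagonalizable over ℂ with an orthonormal basis of eigenvectors in the complexification, then [D^s, D^a] = 0 and hence h·D^s = 2(D^s)². -/
/-!
Self-adjointness of `D^s` passes to the complexification, so for an eigenvector `v` of `D^s`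
with eigenvalue `μ` we get `g([D^s, D^a] v, v) = μ g(D^a v, v) - μ g(D^a v, v) = 0`. The relation
makes `v` an eigenvector of `[D^s, D^a]` with eigenvalue `hμ - 2μ²`, and `g(v, v) = 1` forces this
eigenvalue to vanish. So the complexified commutator kills a basis, and since `ℂ` is faithfully
flat over `ℝ` the commutator itself is zero.
-/

open TensorProduct

namespace LinearMap

variable {R A M : Type*} [CommRing R] [CommRing A] [Algebra R A] [AddCommGroup M] [Module R M]

theorem baseChange_eq_zero_iff [Module.FaithfullyFlat R A] {N : Type*} [AddCommGroup N]
    [Module R N] (f : M →ₗ[R] N) : f.baseChange A = 0 ↔ f = 0 := by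
  rw [Module.FaithfullyFlat.zero_iff_lTensor_zero R A f]
  simp only [LinearMap.ext_iff, zero_apply]
  rfl

theorem IsSelfAdjoint.baseChange {B : M →ₗ[R] M →ₗ[R] R}
    {BA : A ⊗[R] M →ₗ[A] A ⊗[R] M →ₗ[A] A}
    (hBA : ∀ x y, BA (1 ⊗ₜ x) (1 ⊗ₜ y) = algebraMap R A (B x y))
    {T : M →ₗ[R] M} (hT : B.IsSelfAdjoint T) : BA.IsSelfAdjoint (T.baseChange A) := by
  rw [LinearMap.IsSelfAdjoint, isAdjointPair_iff_comp_eq_compl₂]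
  refine AlgebraTensorModule.ext fun a x ↦ AlgebraTensorModule.ext fun b y ↦ ?_
  rw [← mul_one a, ← mul_one b, ← smul_eq_mul, ← smul_eq_mul, ← smul_tmul', ← smul_tmul']
  simp [hBA, hT x y]

section Commutator

variable {K : Type*} [CommRing K] [Module K M] {B : M →ₗ[K] M →ₗ[K] K} {S : M →ₗ[K] M}
  {v : M} {μ : K}

theorem IsSelfAdjoint.apply_commutator_eigenvector_self (hS : B.IsSelfAdjoint S)
    (T : M →ₗ[K] M) (hv : S v = μ • v) : B ((S ∘ₗ T - T ∘ₗ S) v) v = 0 := by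
  simp [hS (T v) v, hv]

theorem IsSelfAdjoint.commutator_apply_eigenvector_eq_zero (hS : B.IsSelfAdjoint S)
    {T : M →ₗ[K] M} {a b : K} (hST : S ∘ₗ T - T ∘ₗ S = a • S - b • S ∘ₗ S)
    (hv : S v = μ • v) (hvv : IsUnit (B v v)) : (S ∘ₗ T - T ∘ₗ S) v = 0 := by
  have heig : (S ∘ₗ T - T ∘ₗ S) v = (a * μ - b * μ ^ 2) • v := by
    simp [hST, hv, smul_smul, sub_smul, pow_two]
  have hdiag := hS.apply_commutator_eigenvector_self T hv
  rw [heig, map_smul, smul_apply, smul_eq_mul, hvv.mul_left_eq_zero] at hdiag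
  rw [heig, hdiag, zero_smul]

end Commutator

end LinearMap

open TensorProduct in
theorem diagonalizable_symmetric_part_commutes_general
    {V : Type*} [AddCommGroup V] [Module ℝ V]
    (g : V →ₗ[ℝ] V →ₗ[ℝ] ℝ)
    (Ds Da : V →ₗ[ℝ] V)
    (hDs : ∀ x y, g (Ds x) y = g x (Ds y))
    (h : ℝ)
    (hrel : Ds ∘ₗ Da - Da ∘ₗ Ds = h • Ds - (2 : ℝ) • (Ds ∘ₗ Ds))
    (gC : (ℂ ⊗[ℝ] V) →ₗ[ℂ] (ℂ ⊗[ℝ] V) →ₗ[ℂ] ℂ)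
    (hgC : ∀ x y : V, gC (1 ⊗ₜ[ℝ] x) (1 ⊗ₜ[ℝ] y) = (g x y : ℂ))
    (ι : Type*) [DecidableEq ι] (bas : Module.Basis ι ℂ (ℂ ⊗[ℝ] V)) (μ : ι → ℂ)
    (heig : ∀ i, (Ds.baseChange ℂ) (bas i) = μ i • bas i)
    (horth : ∀ i j, gC (bas i) (bas j) = if i = j then 1 else 0) :
    Ds ∘ₗ Da = Da ∘ₗ Ds ∧ h • Ds = (2 : ℝ) • (Ds ∘ₗ Ds) := by
  have hDsC : gC.IsSelfAdjoint (Ds.baseChange ℂ) := LinearMap.IsSelfAdjoint.baseChange hgC hDs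
  have hrelC : Ds.baseChange ℂ ∘ₗ Da.baseChange ℂ - Da.baseChange ℂ ∘ₗ Ds.baseChange ℂ
      = (h : ℂ) • Ds.baseChange ℂ - (2 : ℂ) • (Ds.baseChange ℂ ∘ₗ Ds.baseChange ℂ) := by
    rw [← LinearMap.baseChange_comp, ← LinearMap.baseChange_comp, ← LinearMap.baseChange_sub,
      hrel, LinearMap.baseChange_sub, LinearMap.baseChange_smul, LinearMap.baseChange_smul,
      LinearMap.baseChange_comp]
    -- real and complex scalars act on `ℂ`-linear maps compatibly, by definition of the action
    rfl
  have hcommC : (Ds ∘ₗ Da - Da ∘ₗ Ds).baseChange ℂ = 0 := by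
    rw [LinearMap.baseChange_sub, LinearMap.baseChange_comp, LinearMap.baseChange_comp]
    exact bas.ext fun i ↦
      hDsC.commutator_apply_eigenvector_eq_zero hrelC (heig i) (by simp [horth])
  have hcomm : Ds ∘ₗ Da = Da ∘ₗ Ds := by
    rwa [LinearMap.baseChange_eq_zero_iff, sub_eq_zero] at hcommC
  exact ⟨hcomm, by rw [← sub_eq_zero, ← hrel, hcomm, sub_self]⟩

open TensorProduct in
/-- If `D^s` is symmetric, `D^a` antisymmetric, `[D^s,D^a] = hD^s − 2(D^s)²`, and the
complexification of `D^s` admits an orthonormal basis of eigenvectors, then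
`[D^s,D^a] = 0` and `hD^s = 2(D^s)²`. -/
theorem diagonalizable_symmetric_part_commutes
    {V : Type*} [AddCommGroup V] [Module ℝ V] [FiniteDimensional ℝ V]
    (g : V →ₗ[ℝ] V →ₗ[ℝ] ℝ)
    (hsymm : ∀ x y, g x y = g y x)
    (hnd : ∀ x, (∀ y, g x y = 0) → x = 0)
    (Ds Da : V →ₗ[ℝ] V)
    (hDs : ∀ x y, g (Ds x) y = g x (Ds y))
    (hDa : ∀ x y, g (Da x) y = - g x (Da y))
    (h : ℝ)
    (hrel : Ds ∘ₗ Da - Da ∘ₗ Ds = h • Ds - (2 : ℝ) • (Ds ∘ₗ Ds))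
    (gC : (ℂ ⊗[ℝ] V) →ₗ[ℂ] (ℂ ⊗[ℝ] V) →ₗ[ℂ] ℂ)
    (hgC : ∀ x y : V, gC (1 ⊗ₜ[ℝ] x) (1 ⊗ₜ[ℝ] y) = (g x y : ℂ))
    (ι : Type*) [Fintype ι] [DecidableEq ι] (bas : Module.Basis ι ℂ (ℂ ⊗[ℝ] V)) (μ : ι → ℂ)
    (heig : ∀ i, (Ds.baseChange ℂ) (bas i) = μ i • bas i)
    (horth : ∀ i j, gC (bas i) (bas j) = if i = j then 1 else 0) :
    Ds ∘ₗ Da = Da ∘ₗ Ds ∧ h • Ds = (2 : ℝ) • (Ds ∘ₗ Ds) :=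
  diagonalizable_symmetric_part_commutes_general g Ds Da hDs h hrel gC hgC ι bas μ heig horth
end
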